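/- Let m be a natural number and let B : Fin m → Fin m → ℝ be antisymmetric (B i j = −B j i for all i,j). Then the full antisymmetrization over all four indices of (i,j,k,l) ↦ B i j * B k l vanishes for all i,j,k,l (the condition B_{[ij}B_{kl]} = 0) if and only if the antisymmetrization over the first three indices vanishes for all i,j,k,l (the condition B_{[ij}B_{k]l} = 0). -/
import Mathlib


open Finset

/-- Full antisymmetrization of a 4-index expression over all four index slots. -/
noncomputable def alt4 {m : ℕ} (T : Fin m → Fin m → Fin m → Fin m → ℝ)
    (i j k l : Fin m) : ℝ :=
  (1 / 24 : ℝ) * ∑ σ : Equiv.Perm (Fin 4),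
    ((Equiv.Perm.sign σ : ℤ) : ℝ) *
      T (![i, j, k, l] (σ 0)) (![i, j, k, l] (σ 1)) (![i, j, k, l] (σ 2)) (![i, j, k, l] (σ 3))

/-- Antisymmetrization of a 3-index expression over its three index slots. -/
noncomputable def alt3 {m : ℕ} (T : Fin m → Fin m → Fin m → ℝ)
    (i j k : Fin m) : ℝ :=
  (1 / 6 : ℝ) * ∑ σ : Equiv.Perm (Fin 3),
    ((Equiv.Perm.sign σ : ℤ) : ℝ) *
      T (![i, j, k] (σ 0)) (![i, j, k] (σ 1)) (![i, j, k] (σ 2))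

lemma sum_perm_succ' {n : ℕ} (f : Equiv.Perm (Fin (n+1)) → ℝ) :
    ∑ σ : Equiv.Perm (Fin (n+1)), f σ =
    ∑ p : Fin (n+1), ∑ τ : Equiv.Perm (Fin n), f (Equiv.Perm.decomposeFin.symm (p, τ)) := by
  rw [Fintype.sum_equiv Equiv.Perm.decomposeFin f
    (fun p => f (Equiv.Perm.decomposeFin.symm p)) (fun σ => by simp), Fintype.sum_prod_type]

lemma dec_apply_two' {n : ℕ} (e : Equiv.Perm (Fin (n + 2))) (p : Fin (n + 3)) :
    Equiv.Perm.decomposeFin.symm (p, e) 2 = Equiv.swap 0 p (e 1).succ := by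
  rw [show (2 : Fin (n+3)) = (1 : Fin (n+2)).succ from rfl,
    Equiv.Perm.decomposeFin_symm_apply_succ]

lemma dec_apply_three' {n : ℕ} (e : Equiv.Perm (Fin (n + 3))) (p : Fin (n + 4)) :
    Equiv.Perm.decomposeFin.symm (p, e) 3 = Equiv.swap 0 p (e 2).succ := by
  rw [show (3 : Fin (n+4)) = (2 : Fin (n+3)).succ from rfl,
    Equiv.Perm.decomposeFin_symm_apply_succ]

set_option maxHeartbeats 1600000 in
lemma alt4_eq_alt3 (m : ℕ) (B : Fin m → Fin m → ℝ)
    (hB : ∀ i j, B i j = - B j i) (i j k l : Fin m) :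
    alt4 (fun i j k l => B i j * B k l) i j k l = alt3 (fun a b c => B a b * B c l) i j k := by
  rw [alt4, alt3]
  simp only [sum_perm_succ', Fin.sum_univ_succ, Fin.sum_univ_zero, Finset.univ_unique,
    Finset.sum_singleton, Equiv.Perm.default_eq,
    Equiv.Perm.decomposeFin.symm_sign, Equiv.Perm.decomposeFin_symm_apply_zero,
    Equiv.Perm.decomposeFin_symm_apply_one, dec_apply_two', dec_apply_three',
    Equiv.Perm.decomposeFin_symm_apply_succ]
  simp (config := { decide := true }) only [Equiv.swap_apply_def, Fin.ext_iff, Equiv.Perm.one_apply,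
    Fin.val_zero, Fin.val_one, Fin.succ, Fin.isValue, Matrix.cons_val', Matrix.cons_val_zero,
    Matrix.cons_val_one, Matrix.head_cons, Matrix.head_fin_const, Matrix.cons_val_fin_one]
  norm_num
  norm_num
  ring_nf
  simp only [hB j i, hB k i, hB k j, hB l i, hB l j, hB l k]
  ring

/-- For an antisymmetric `B`, the Plucker condition `B_{[ij}B_{kl]} = 0` holds iff the
three-index condition `B_{[ij}B_{k]l} = 0` holds. -/
theorem plucker_iff_three_index (m : ℕ) (B : Fin m → Fin m → ℝ)
    (hB : ∀ i j, B i j = - B j i) :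
    (∀ i j k l, alt4 (fun i j k l => B i j * B k l) i j k l = 0) ↔
    (∀ i j k l, alt3 (fun a b c => B a b * B c l) i j k = 0) := by
  constructor
  · intro h i j k l
    rw [← alt4_eq_alt3 m B hB]; exact h i j k l
  · intro h i j k l
    rw [alt4_eq_alt3 m B hB]; exact h i j k l
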